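/- The poset of ornamentations, ordered pointwise by inclusion (ϱ ≤ ϱ′ if and only if ϱ(i) ⊆ ϱ′(i) for all i ∈ ℤ/nℤ), is order-isomorphic to the poset of 312-avoiding real TITOs under the Dyer order. -/

import Mathlib

structure TITO (n : ℕ) where
  rel : ℤ → ℤ → Prop
  refl : ∀ a, rel a a
  antisymm : ∀ a b, rel a b → rel b a → a = b
  trans : ∀ a b c, rel a b → rel b c → rel a c
  total : ∀ a b, rel a b ∨ rel b a
  invariant : ∀ a b, rel a b ↔ rel (a + n) (b + n)

namespace TITO

variable {n : ℕ}

/-- The inversion set of a TITO. -/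
def Inversions (t : TITO n) : Set (ℤ × ℤ) := {p | p.1 < p.2 ∧ t.rel p.2 p.1}

/-- A TITO is 312-avoiding if there are no integers `a < b < c` with `c ≼ a` and `a ≼ b`. -/
def Avoids312 (t : TITO n) : Prop :=
  ¬ ∃ a b c : ℤ, a < b ∧ b < c ∧ t.rel c a ∧ t.rel a b

/-- A TITO is 132-avoiding if there are no integers `a < b < c` with `a ≼ c` and `c ≼ b`. -/
def Avoids132 (t : TITO n) : Prop :=
  ¬ ∃ a b c : ℤ, a < b ∧ b < c ∧ t.rel a c ∧ t.rel c b

/-- A set is order-convex for a TITO. -/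
def OrderConvex (t : TITO n) (S : Set ℤ) : Prop :=
  ∀ x ∈ S, ∀ z ∈ S, ∀ y : ℤ, t.rel x y → t.rel y z → y ∈ S

/-- A block of a TITO: an order-convex set with no minimal and no maximal element in which
all intervals are finite. -/
def IsBlock (t : TITO n) (I : Set ℤ) : Prop :=
  t.OrderConvex I ∧
  (∀ a ∈ I, ∃ b ∈ I, b ≠ a ∧ t.rel b a) ∧
  (∀ a ∈ I, ∃ b ∈ I, b ≠ a ∧ t.rel a b) ∧
  (∀ a ∈ I, ∀ c ∈ I, t.rel a c → {b : ℤ | t.rel a b ∧ t.rel b c}.Finite)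

/-- A block is waxing if `a ≼ a + n` for every `a` in it. -/
def Waxing (t : TITO n) (I : Set ℤ) : Prop := ∀ a ∈ I, t.rel a (a + n)

/-- A block is waning if `a + n ≼ a` for every `a` in it. -/
def Waning (t : TITO n) (I : Set ℤ) : Prop := ∀ a ∈ I, t.rel (a + n) a

/-- A TITO is real if `a ≼ a + n` whenever the residue class of `a` mod `n` is order-convex. -/
def IsReal (t : TITO n) : Prop :=
  ∀ a : ℤ, t.OrderConvex {x : ℤ | ∃ k : ℤ, x = a + k * n} → t.rel a (a + n)

/-- A TITO is co-real if `a + n ≼ a` whenever the residue class of `a` mod `n` is order-convex. -/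
def IsCoReal (t : TITO n) : Prop :=
  ∀ a : ℤ, t.OrderConvex {x : ℤ | ∃ k : ℤ, x = a + k * n} → t.rel (a + n) a

/-- `(a, b)` with `a < b` is a lower wall if `b ≼ a` is a cover relation of the total order. -/
def LowerWall (t : TITO n) (a b : ℤ) : Prop :=
  a < b ∧ t.rel b a ∧ ∀ z : ℤ, z ≠ a → z ≠ b → ¬ (t.rel b z ∧ t.rel z a)

end TITO

/-- An ornament: a nonempty cyclically-consecutive subset of `ℤ/nℤ`. -/
def IsOrnament (n : ℕ) (o : Set (ZMod n)) : Prop :=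
  ∃ (a : ZMod n) (k : ℕ), k ≤ n - 1 ∧ o = {x : ZMod n | ∃ j : ℕ, j ≤ k ∧ x = a + (j : ZMod n)}

/-- An ornament `o` is hung at `i` if `i ∈ o` and either `i - 1 ∉ o` or `o = ℤ/nℤ`. -/
def HungAt (n : ℕ) (o : Set (ZMod n)) (i : ZMod n) : Prop :=
  i ∈ o ∧ (i - 1 ∉ o ∨ o = Set.univ)

/-- An ornamentation. -/
def IsOrnamentation (n : ℕ) (ρ : ZMod n → Set (ZMod n)) : Prop :=
  (∀ i : ZMod n, IsOrnament n (ρ i) ∧ HungAt n (ρ i) i) ∧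
  (∀ i j : ZMod n, i ∈ ρ j → ρ i ⊆ ρ j)

/-!
By 312-avoidance, `c ≼ a` with `a < b < c` forces `b ≼ a`, so in a 312-avoiding TITO the set
`{m : ℕ | a + m ≼ a}` is an initial segment of `ℕ`; its supremum is a depth `d (a mod n) ∈ ℕ∞`,
and the inversions are exactly the pairs `(a, b)` with `0 < b - a ≤ d a`. Conversely, every
depth function that is nested (`m ≤ d i → d (i + m) + m ≤ d i`, i.e. these pairs form a
transitive relation) arises this way, the Dyer order becomes the pointwise order on depths, and
the TITO is real iff `d` is not infinite at exactly one residue.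

On the ornament side, an ornament hung at `i` is an arc `{i, …, i + k}` with `k < n`, and the
axiom `i ∈ ρ j → ρ i ⊆ ρ j` of an ornamentation is nestedness of `i ↦ k`. Full ornaments are the
one subtlety: a lone full ornament gets depth `n - 1`, whereas full ornaments hung at two or more
vertices get depth `∞`, matching realness.
-/

namespace TITO

variable {n : ℕ}

theorem rel_add_mul_iff (t : TITO n) (a b q : ℤ) :
    t.rel (a + q * n) (b + q * n) ↔ t.rel a b := by
  induction q using Int.induction_on with
  | zero => simp
  | succ q ih =>
    rw [← ih, t.invariant (a + q * n)]
    ring_nf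
  | pred q ih =>
    rw [← ih, t.invariant (a + (-q - 1) * n)]
    ring_nf

theorem mem_inversions_iff (t : TITO n) {a b : ℤ} (h : a < b) :
    (a, b) ∈ t.Inversions ↔ t.rel b a :=
  and_iff_right h

theorem rel_iff_notMem_inversions (t : TITO n) {a b : ℤ} (h : a < b) :
    t.rel a b ↔ (a, b) ∉ t.Inversions := by
  rw [mem_inversions_iff t h]
  exact ⟨fun hab hba => h.ne (t.antisymm a b hab hba), (t.total a b).resolve_right⟩

theorem inversions_injective : Function.Injective (Inversions : TITO n → Set (ℤ × ℤ)) := by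
  intro t t' h
  have hrel : t.rel = t'.rel := by
    funext a b
    apply propext
    rcases lt_trichotomy a b with hab | rfl | hab
    · rw [rel_iff_notMem_inversions t hab, rel_iff_notMem_inversions t' hab, h]
    · exact iff_of_true (t.refl a) (t'.refl a)
    · rw [← mem_inversions_iff t hab, ← mem_inversions_iff t' hab, h]
  cases t
  cases t'
  congr

theorem avoids312_of_inversions {t : TITO n}
    (h : ∀ a b c, a < b → b < c → (a, c) ∈ t.Inversions → (a, b) ∈ t.Inversions) :
    t.Avoids312 := by
  rintro ⟨a, b, c, hab, hbc, hca, hab'⟩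
  rw [← mem_inversions_iff t (hab.trans hbc)] at hca
  exact (t.rel_iff_notMem_inversions hab).1 hab' (h a b c hab hbc hca)

theorem Avoids312.rel_of_lt_of_lt {t : TITO n} (h : t.Avoids312) {a b c : ℤ}
    (hab : a < b) (hbc : b < c) (hca : t.rel c a) : t.rel b a :=
  (t.total a b).resolve_left fun hab' => h ⟨a, b, c, hab, hbc, hca, hab'⟩

def ofInversions (I : ℤ → ℤ → Prop) (hlt : ∀ a b, I a b → a < b)
    (htrans : ∀ a b c, I a b → I b c → I a c)
    (hcotrans : ∀ a b c, a < b → b < c → I a c → I a b ∨ I b c)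
    (hinv : ∀ a b, I a b ↔ I (a + n) (b + n)) : TITO n where
  rel a b := (a ≤ b ∧ ¬ I a b) ∨ I b a
  refl a := Or.inl ⟨le_rfl, fun h => (hlt a a h).false⟩
  antisymm a b := by
    rintro (⟨h1, h2⟩ | h1) (⟨h3, h4⟩ | h3) <;> grind
  trans a b c := by
    rintro (⟨h1, h2⟩ | h1) (⟨h3, h4⟩ | h3) <;> grind
  total a b := by
    rcases le_total a b with h | h
    · by_cases hab : I a b
      · exact Or.inr (Or.inr hab)
      · exact Or.inl (Or.inl ⟨h, hab⟩)
    · by_cases hba : I b a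
      · exact Or.inl (Or.inr hba)
      · exact Or.inr (Or.inl ⟨h, hba⟩)
  invariant a b := by
    rw [hinv a b, hinv b a]
    constructor <;> rintro (⟨h1, h2⟩ | h1) <;>
      first | exact Or.inr h1 | exact Or.inl ⟨by omega, h2⟩

theorem inversions_ofInversions (I : ℤ → ℤ → Prop) (hlt htrans hcotrans hinv) :
    (ofInversions (n := n) I hlt htrans hcotrans hinv).Inversions = {p | I p.1 p.2} := by
  ext ⟨a, b⟩
  simp only [Inversions, ofInversions, Set.mem_ofPred_eq]
  constructor
  · rintro ⟨h, ⟨h1, -⟩ | h1⟩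
    · omega
    · exact h1
  · exact fun h => ⟨hlt a b h, Or.inr h⟩

end TITO

section DepthFunction

variable {n : ℕ}

def IsNested (d : ZMod n → ℕ∞) : Prop :=
  ∀ (i : ZMod n) (m : ℕ), (m : ℕ∞) ≤ d i → d (i + m) + m ≤ d i

def NoLoneTop (d : ZMod n → ℕ∞) : Prop :=
  ∀ i, d i = ⊤ → ∃ j ≠ i, d j = ⊤

def DepthInv (d : ZMod n → ℕ∞) (a b : ℤ) : Prop :=
  a < b ∧ ((b - a).toNat : ℕ∞) ≤ d a

variable {d : ZMod n → ℕ∞}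

theorem intCast_add_toNat_sub {a b : ℤ} (h : a ≤ b) :
    (a : ZMod n) + ((b - a).toNat : ℕ) = b := by
  rw [← Int.cast_natCast, Int.toNat_of_nonneg (by omega)]
  push_cast
  ring

theorem depthInv_add_natCast {a : ℤ} {m : ℕ} :
    DepthInv d a (a + m) ↔ 0 < m ∧ (m : ℕ∞) ≤ d a := by
  simp [DepthInv]

theorem DepthInv.of_lt {a b c : ℤ} (h : DepthInv d a c) (hab : a < b) (hbc : b < c) :
    DepthInv d a b :=
  ⟨hab, le_trans (Nat.cast_le.2 (Int.toNat_le_toNat (Int.sub_le_sub_right hbc.le a))) h.2⟩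

theorem DepthInv.add_natCast_iff {a b : ℤ} :
    DepthInv d (a + n) (b + n) ↔ DepthInv d a b := by
  simp [DepthInv]

theorem IsNested.add_toNat_le (hd : IsNested d) {a b : ℤ} (h : DepthInv d a b) :
    d b + ((b - a).toNat : ℕ∞) ≤ d a := by
  simpa [intCast_add_toNat_sub h.1.le] using hd a _ h.2

theorem IsNested.depthInv_trans (hd : IsNested d) {a b c : ℤ} (hab : DepthInv d a b)
    (hbc : DepthInv d b c) : DepthInv d a c := by
  refine ⟨hab.1.trans hbc.1, ?_⟩
  calc (((c - a).toNat : ℕ) : ℕ∞) = ((c - b).toNat : ℕ) + ((b - a).toNat : ℕ) := by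
        rw [← Nat.cast_add]; congr 1; have := hab.1; have := hbc.1; omega
    _ ≤ d b + ((b - a).toNat : ℕ) := by gcongr; exact hbc.2
    _ ≤ d a := hd.add_toNat_le hab

theorem IsNested.eq_top_of_le [NeZero n] (hd : IsNested d) {i : ZMod n}
    (h : (n : ℕ∞) ≤ d i) : d i = ⊤ := by
  have := hd i n h
  rw [ZMod.natCast_self, add_zero] at this
  by_contra hne
  lift d i to ℕ using hne with k
  norm_cast at this
  exact NeZero.ne n (by omega)

theorem IsNested.lt_of_ne_top [NeZero n] (hd : IsNested d) {i : ZMod n} (h : d i ≠ ⊤) :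
    d i < n :=
  lt_of_not_ge fun hle => h (hd.eq_top_of_le hle)

def ofDepth (d : ZMod n → ℕ∞) (hd : IsNested d) : TITO n :=
  TITO.ofInversions (DepthInv d) (fun _ _ h => h.1) (fun _ _ _ => hd.depthInv_trans)
    (fun _ _ _ hab hbc h => Or.inl (h.of_lt hab hbc)) (fun _ _ => DepthInv.add_natCast_iff.symm)

theorem inversions_ofDepth (hd : IsNested d) :
    (ofDepth d hd).Inversions = {p | DepthInv d p.1 p.2} :=
  TITO.inversions_ofInversions ..

theorem avoids312_ofDepth (hd : IsNested d) : (ofDepth d hd).Avoids312 :=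
  TITO.avoids312_of_inversions <| by
    simp only [inversions_ofDepth, Set.mem_ofPred_eq]
    exact fun a b c hab hbc h => h.of_lt hab hbc

theorem setOf_depthInv_subset_iff [NeZero n] {d' : ZMod n → ℕ∞} :
    {p : ℤ × ℤ | DepthInv d p.1 p.2} ⊆ {p | DepthInv d' p.1 p.2} ↔ d ≤ d' := by
  refine ⟨fun h i => ?_, fun h p hp => ⟨hp.1, hp.2.trans (h _)⟩⟩
  refine ENat.forall_natCast_le_iff_le.1 fun m hm => ?_
  rcases Nat.eq_zero_or_pos m with rfl | hm0
  · simp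
  have hmem : ((i.val : ℤ), (i.val : ℤ) + m) ∈ {p : ℤ × ℤ | DepthInv d p.1 p.2} := by
    simpa [depthInv_add_natCast, hm0] using hm
  simpa [depthInv_add_natCast] using (h hmem).2

theorem inversions_ofDepth_subset_iff [NeZero n] {d' : ZMod n → ℕ∞} (hd : IsNested d)
    (hd' : IsNested d') : (ofDepth d hd).Inversions ⊆ (ofDepth d' hd').Inversions ↔ d ≤ d' := by
  rw [inversions_ofDepth, inversions_ofDepth, setOf_depthInv_subset_iff]

theorem IsNested.eq_top_of_rel (hd : IsNested d) {x y : ℤ} (hx : d x = ⊤)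
    (h : (ofDepth d hd).rel x y) : d y = ⊤ := by
  rcases lt_trichotomy x y with hxy | rfl | hyx
  · rw [TITO.rel_iff_notMem_inversions _ hxy, inversions_ofDepth] at h
    exact absurd ⟨hxy, hx ▸ le_top⟩ h
  · exact hx
  · rw [← TITO.mem_inversions_iff _ hyx, inversions_ofDepth] at h
    simpa [hx] using hd.add_toNat_le h

theorem exists_eq_add_mul_iff {a x : ℤ} : (∃ k : ℤ, x = a + k * n) ↔ (x : ZMod n) = a := by
  rw [eq_comm, ZMod.intCast_eq_intCast_iff_dvd_sub]
  exact ⟨fun ⟨k, hk⟩ => ⟨k, by rw [hk]; ring⟩, fun ⟨k, hk⟩ => ⟨k, by linear_combination hk⟩⟩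

theorem isReal_ofDepth_iff [NeZero n] (hd : IsNested d) :
    (ofDepth d hd).IsReal ↔ NoLoneTop d := by
  constructor
  · intro hreal i hi
    by_contra hlone
    push Not at hlone
    set a : ℤ := (i.val : ℤ)
    have hai : (a : ZMod n) = i := by simp [a]
    -- `d` is infinite only at `i`, and infinite depth propagates upwards along `≼`
    have hconv : (ofDepth d hd).OrderConvex {x | ∃ k : ℤ, x = a + k * n} := by
      intro x hx z _ y hxy _
      simp only [Set.mem_ofPred_eq, exists_eq_add_mul_iff, hai] at hx ⊢
      by_contra hy
      exact hlone _ hy (hd.eq_top_of_rel (by rw [hx, hi]) hxy)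
    have hinv : (ofDepth d hd).rel (a + n) a := by
      rw [← TITO.mem_inversions_iff _ (by simpa using NeZero.pos n), inversions_ofDepth]
      exact depthInv_add_natCast.2 ⟨NeZero.pos n, by rw [hai, hi]; exact le_top⟩
    have := (ofDepth d hd).antisymm _ _ (hreal a hconv) hinv
    exact NeZero.ne n (by omega)
  · intro hlone a hconv
    rw [TITO.rel_iff_notMem_inversions _ (by simpa using NeZero.pos n), inversions_ofDepth,
      Set.mem_ofPred_eq, depthInv_add_natCast]
    rintro ⟨-, hle⟩
    have ha : d a = ⊤ := hd.eq_top_of_le hle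
    obtain ⟨j, hja, hj⟩ := hlone _ ha
    have hv : 0 < (j - (a : ZMod n)).val := ZMod.val_pos.2 (sub_ne_zero.2 hja)
    have hvn := ZMod.val_lt (j - (a : ZMod n))
    set y : ℤ := a + ((j - (a : ZMod n)).val : ℕ)
    have hyj : (y : ZMod n) = j := by simp [y]
    -- `a + n ≼ y ≼ a` because `d` is infinite at both `y` and `a`
    have hya : (ofDepth d hd).rel (a + n) y := by
      rw [← TITO.mem_inversions_iff _ (by omega), inversions_ofDepth]
      exact ⟨by omega, by rw [hyj, hj]; exact le_top⟩
    have hay : (ofDepth d hd).rel y a := by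
      rw [← TITO.mem_inversions_iff _ (by omega), inversions_ofDepth]
      exact depthInv_add_natCast.2 ⟨hv, by rw [ha]; exact le_top⟩
    have hmem := hconv (a + n) ⟨1, by ring⟩ a ⟨0, by ring⟩ y hya hay
    rw [Set.mem_ofPred_eq, exists_eq_add_mul_iff, hyj] at hmem
    exact hja hmem

end DepthFunction

namespace TITO

variable {n : ℕ}

noncomputable def depthAt (t : TITO n) (a : ℤ) : ℕ∞ :=
  ⨆ (m : ℕ) (_ : t.rel (a + m) a), (m : ℕ∞)

noncomputable def depth (t : TITO n) (i : ZMod n) : ℕ∞ :=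
  t.depthAt i.val

theorem depthAt_add_mul (t : TITO n) (a q : ℤ) : t.depthAt (a + q * n) = t.depthAt a := by
  simp_rw [depthAt, add_right_comm a (q * n), rel_add_mul_iff]

theorem depth_intCast [NeZero n] (t : TITO n) (a : ℤ) : t.depth a = t.depthAt a := by
  rw [depth, ZMod.val_intCast, ← t.depthAt_add_mul (a % n) (a / n)]
  congr 1
  rw [mul_comm, Int.emod_add_mul_ediv]

theorem Avoids312.natCast_le_depthAt_iff {t : TITO n} (h : t.Avoids312) (a : ℤ) (m : ℕ) :
    (m : ℕ∞) ≤ t.depthAt a ↔ t.rel (a + m) a := by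
  refine ⟨fun hm => ?_, fun hm => le_iSup₂_of_le m hm le_rfl⟩
  cases m with
  | zero => simpa using t.refl a
  | succ k =>
    rw [Nat.cast_succ, ENat.add_one_le_iff (ENat.natCast_ne_top k)] at hm
    obtain ⟨m, hm⟩ := lt_iSup_iff.1 hm
    obtain ⟨hrel, hkm⟩ := lt_iSup_iff.1 hm
    rcases (Nat.succ_le_of_lt (Nat.cast_lt.1 hkm)).eq_or_lt with rfl | hlt
    · exact hrel
    · exact h.rel_of_lt_of_lt (by omega) (by omega) hrel

theorem Avoids312.isNested_depth [NeZero n] {t : TITO n} (h : t.Avoids312) :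
    IsNested t.depth := by
  intro i m hm
  obtain ⟨a, rfl⟩ : ∃ a : ℤ, (a : ZMod n) = i := ⟨i.val, by simp⟩
  rw [show (a : ZMod n) + m = ((a + m : ℤ) : ZMod n) by push_cast; rfl]
  rw [depth_intCast] at hm
  rw [depth_intCast, depth_intCast]
  have hcancel := ENat.addLECancellable_of_ne_top (ENat.natCast_ne_top m)
  rw [← hcancel.le_tsub_iff_right hm]
  refine iSup₂_le fun k hk => ?_
  rw [hcancel.le_tsub_iff_right hm, ← Nat.cast_add, h.natCast_le_depthAt_iff,
    show a + ((k + m : ℕ) : ℤ) = a + m + k by push_cast; ring]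
  exact t.trans _ _ _ hk ((h.natCast_le_depthAt_iff a m).1 hm)

theorem Avoids312.eq_ofDepth [NeZero n] {t : TITO n} (h : t.Avoids312) :
    t = ofDepth t.depth h.isNested_depth := by
  apply inversions_injective
  ext ⟨a, b⟩
  rw [inversions_ofDepth]
  simp only [Inversions, DepthInv, Set.mem_ofPred_eq, and_congr_right_iff]
  intro hab
  obtain ⟨m, rfl⟩ : ∃ m : ℕ, b = a + m := ⟨(b - a).toNat, by omega⟩
  simp [depth_intCast, h.natCast_le_depthAt_iff]

end TITO

section Ornament

open Set

variable {n : ℕ}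

/-- The cyclic interval `{i, i + 1, …, i + k}`, truncated to at most `n` residues. -/
def arc (i : ZMod n) (k : ℕ∞) : Set (ZMod n) :=
  {x | ∃ m : ℕ, m < n ∧ (m : ℕ∞) ≤ k ∧ x = i + m}

theorem exists_lt_eq_add [NeZero n] (i x : ZMod n) : ∃ m < n, x = i + m :=
  ⟨(x - i).val, ZMod.val_lt _, by simp⟩

theorem add_natCast_mem_arc_iff {i : ZMod n} {k : ℕ∞} {m : ℕ} (hm : m < n) :
    i + m ∈ arc i k ↔ (m : ℕ∞) ≤ k := by
  refine ⟨fun ⟨m', hm', hk, he⟩ => ?_, fun h => ⟨m, hm, h, rfl⟩⟩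
  rw [add_left_cancel_iff, ZMod.natCast_eq_natCast_iff', Nat.mod_eq_of_lt hm,
    Nat.mod_eq_of_lt hm'] at he
  exact he ▸ hk

theorem arc_mono {i : ZMod n} {k k' : ℕ∞} (h : k ≤ k') : arc i k ⊆ arc i k' :=
  fun _ ⟨m, hm, hk, he⟩ => ⟨m, hm, hk.trans h, he⟩

theorem arc_eq_univ_iff [NeZero n] {i : ZMod n} {k : ℕ∞} :
    arc i k = univ ↔ ((n - 1 : ℕ) : ℕ∞) ≤ k := by
  have hn := NeZero.pos n
  refine ⟨fun h => (add_natCast_mem_arc_iff (by omega)).1 (h ▸ mem_univ (i + (n - 1 : ℕ))),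
    fun h => eq_univ_of_forall fun x => ?_⟩
  obtain ⟨m, hm, rfl⟩ := exists_lt_eq_add i x
  exact ⟨m, hm, le_trans (by norm_cast; omega) h, rfl⟩

theorem arc_top [NeZero n] (i : ZMod n) : arc i ⊤ = univ :=
  arc_eq_univ_iff.2 le_top

theorem arc_natCast {i : ZMod n} {k : ℕ} (hk : k < n) :
    arc i k = {x | ∃ j ≤ k, x = i + j} := by
  ext x
  exact ⟨fun ⟨m, _, hmk, hx⟩ => ⟨m, Nat.cast_le.1 hmk, hx⟩,
    fun ⟨j, hjk, hx⟩ => ⟨j, by omega, Nat.cast_le.2 hjk, hx⟩⟩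

theorem isOrnament_arc [NeZero n] (i : ZMod n) (k : ℕ∞) : IsOrnament n (arc i k) := by
  have hn := NeZero.pos n
  set K := (min k ((n - 1 : ℕ) : ℕ∞)).toNat
  have hK : (K : ℕ∞) = min k ((n - 1 : ℕ) : ℕ∞) :=
    ENat.natCast_toNat (min_le_right _ _ |>.trans_lt (ENat.natCast_lt_top _)).ne
  have hKn : K ≤ n - 1 := by exact_mod_cast hK.trans_le (min_le_right _ _)
  refine ⟨i, K, hKn, ?_⟩
  rw [← arc_natCast (by omega)]
  ext x
  refine ⟨fun ⟨m, hm, hmk, hx⟩ => ⟨m, hm, ?_, hx⟩, fun h => arc_mono (hK ▸ min_le_left _ _) h⟩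
  rw [hK, le_min_iff]
  exact ⟨hmk, by norm_cast; omega⟩

theorem hungAt_arc [NeZero n] (i : ZMod n) (k : ℕ∞) : HungAt n (arc i k) i := by
  have hn := NeZero.pos n
  refine ⟨⟨0, hn, by simp, by simp⟩, or_iff_not_imp_left.2 fun h => arc_eq_univ_iff.2 ?_⟩
  have hpred : i - 1 = i + (n - 1 : ℕ) := by
    rw [Nat.cast_sub (by omega), ZMod.natCast_self]
    ring
  rw [not_not, hpred, add_natCast_mem_arc_iff (by omega)] at h
  exact h

theorem IsOrnament.eq_arc [NeZero n] {o : Set (ZMod n)} {i : ZMod n} (ho : IsOrnament n o)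
    (hh : HungAt n o i) : ∃ k < n, o = arc i k := by
  have hn := NeZero.pos n
  obtain ⟨a, k, hk, rfl⟩ := ho
  obtain ⟨⟨j, hjk, rfl⟩, hpred | huniv⟩ := hh
  · refine ⟨k, by omega, ?_⟩
    rw [arc_natCast (by omega)]
    cases j with
    | zero => simp
    | succ j =>
      refine absurd ⟨j, by omega, ?_⟩ hpred
      push_cast
      ring
  · exact ⟨n - 1, by omega, by rw [huniv, eq_comm, arc_eq_univ_iff]⟩

theorem add_natCast_ne_self {i : ZMod n} {m : ℕ} (h0 : 0 < m) (hm : m < n) :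
    i + (m : ZMod n) ≠ i := by
  rw [ne_eq, add_eq_left, ← Nat.cast_zero, ZMod.natCast_eq_natCast_iff', Nat.mod_eq_of_lt hm,
    Nat.zero_mod]
  exact h0.ne'

open scoped Classical in
theorem findGreatest_mem_arc {i : ZMod n} {k : ℕ} (hk : k < n) :
    Nat.findGreatest (fun m => i + (m : ZMod n) ∈ arc i k) (n - 1) = k := by
  refine Nat.findGreatest_eq_iff.2
    ⟨by omega, fun _ => ⟨k, hk, le_rfl, rfl⟩, fun m hkm hm h => ?_⟩
  rw [add_natCast_mem_arc_iff (by omega), Nat.cast_le] at h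
  omega

end Ornament

section OrnamentDepth

open Set

variable {n : ℕ} {ρ ρ' : ZMod n → Set (ZMod n)} {d : ZMod n → ℕ∞}

open scoped Classical in
noncomputable def ornDepth (ρ : ZMod n → Set (ZMod n)) (i : ZMod n) : ℕ∞ :=
  if ρ i = univ ∧ ∃ j ≠ i, ρ j = univ then ⊤
  else Nat.findGreatest (fun m => i + (m : ZMod n) ∈ ρ i) (n - 1)

theorem ornDepth_eq_top_iff {i : ZMod n} :
    ornDepth ρ i = ⊤ ↔ ρ i = univ ∧ ∃ j ≠ i, ρ j = univ := by
  unfold ornDepth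
  split_ifs with h <;> simp [h]

open scoped Classical in
theorem ornDepth_of_ne_top {i : ZMod n} (h : ornDepth ρ i ≠ ⊤) :
    ornDepth ρ i = Nat.findGreatest (fun m => i + (m : ZMod n) ∈ ρ i) (n - 1) := by
  rw [ne_eq, ornDepth_eq_top_iff] at h
  rw [ornDepth, if_neg h]

open scoped Classical in
theorem ornDepth_lt_of_ne_top [NeZero n] {i : ZMod n} (h : ornDepth ρ i ≠ ⊤) :
    ornDepth ρ i < n := by
  rw [ornDepth_of_ne_top h]
  exact Nat.cast_lt.2 ((Nat.findGreatest_le _).trans_lt (Nat.sub_lt (NeZero.pos n) one_pos))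

theorem noLoneTop_ornDepth (ρ : ZMod n → Set (ZMod n)) : NoLoneTop (ornDepth ρ) := by
  intro i hi
  obtain ⟨hi, j, hji, hj⟩ := ornDepth_eq_top_iff.1 hi
  exact ⟨j, hji, ornDepth_eq_top_iff.2 ⟨hj, i, hji.symm, hi⟩⟩

theorem IsOrnamentation.eq_arc_ornDepth [NeZero n] (hρ : IsOrnamentation n ρ) (i : ZMod n) :
    ρ i = arc i (ornDepth ρ i) := by
  by_cases htop : ornDepth ρ i = ⊤
  · rw [htop, arc_top, (ornDepth_eq_top_iff.1 htop).1]
  · obtain ⟨k, hk, hρi⟩ := (hρ.1 i).1.eq_arc (hρ.1 i).2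
    rw [ornDepth_of_ne_top htop, hρi, findGreatest_mem_arc hk]

theorem IsOrnamentation.subset_iff_ornDepth_le [NeZero n] (hρ : IsOrnamentation n ρ)
    (hρ' : IsOrnamentation n ρ') : (∀ i, ρ i ⊆ ρ' i) ↔ ornDepth ρ ≤ ornDepth ρ' := by
  refine ⟨fun h i => ?_, fun h i => ?_⟩
  · by_cases htop : ornDepth ρ i = ⊤
    · obtain ⟨hi, j, hji, hj⟩ := ornDepth_eq_top_iff.1 htop
      rw [htop, ornDepth_eq_top_iff.2 ⟨univ_subset_iff.1 (hi ▸ h i), j, hji,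
        univ_subset_iff.1 (hj ▸ h j)⟩]
    · have hlt := ornDepth_lt_of_ne_top htop
      obtain ⟨k, hk⟩ := ENat.ne_top_iff_exists.1 htop
      rw [← hk] at hlt ⊢
      have hmem : i + (k : ZMod n) ∈ ρ i := by
        rw [hρ.eq_arc_ornDepth, add_natCast_mem_arc_iff (by exact_mod_cast hlt), hk]
      have := h i hmem
      rwa [hρ'.eq_arc_ornDepth, add_natCast_mem_arc_iff (by exact_mod_cast hlt)] at this
  · rw [hρ.eq_arc_ornDepth, hρ'.eq_arc_ornDepth]
    exact arc_mono (h i)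

theorem IsOrnamentation.exists_eq_arc_of_ne_top [NeZero n] (hρ : IsOrnamentation n ρ)
    {i : ZMod n} (h : ornDepth ρ i ≠ ⊤) : ∃ k < n, ornDepth ρ i = k ∧ ρ i = arc i k := by
  obtain ⟨k, hk⟩ := ENat.ne_top_iff_exists.1 h
  exact ⟨k, by exact_mod_cast hk ▸ ornDepth_lt_of_ne_top h, hk.symm, hk ▸ hρ.eq_arc_ornDepth i⟩

theorem IsOrnamentation.isNested_ornDepth [NeZero n] (hρ : IsOrnamentation n ρ) :
    IsNested (ornDepth ρ) := by
  intro i m hm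
  by_cases hi : ornDepth ρ i = ⊤
  · simp [hi]
  rcases Nat.eq_zero_or_pos m with rfl | hm0
  · simp
  obtain ⟨K, hKn, hK, hρi⟩ := hρ.exists_eq_arc_of_ne_top hi
  rw [hK, Nat.cast_le] at hm
  set j := i + (m : ZMod n)
  have hji : j ∈ ρ i := by rw [hρi, add_natCast_mem_arc_iff (by omega)]; exact_mod_cast hm
  have hsub : ρ j ⊆ ρ i := hρ.2 j i hji
  have hji' : j ≠ i := add_natCast_ne_self hm0 (by omega)
  have hj : ornDepth ρ j ≠ ⊤ := by
    intro hj
    have hju := (ornDepth_eq_top_iff.1 hj).1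
    exact hi (ornDepth_eq_top_iff.2 ⟨univ_subset_iff.1 (hju ▸ hsub), j, hji', hju⟩)
  obtain ⟨L, hLn, hL, hρj⟩ := hρ.exists_eq_arc_of_ne_top hj
  rw [hK, hL, ← Nat.cast_add, Nat.cast_le]
  by_contra! hlt
  -- `ρ j` would reach `i + (K + 1)`, which lies outside `ρ i` unless it is `i` itself
  have hmem : i + ((K + 1 : ℕ) : ZMod n) ∈ ρ j := by
    rw [hρj, show i + ((K + 1 : ℕ) : ZMod n) = j + ((K + 1 - m : ℕ) : ZMod n) by
      simp only [j]; push_cast [Nat.cast_sub (show m ≤ K + 1 by omega)]; ring]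
    rw [add_natCast_mem_arc_iff (by omega), Nat.cast_le]
    omega
  rcases (show K + 1 ≤ n by omega).eq_or_lt with hKn' | hKn'
  · have hiu : ρ i = univ := by
      rw [hρi, arc_eq_univ_iff, Nat.cast_le]
      omega
    rw [hKn', ZMod.natCast_self, add_zero] at hmem
    exact hi (ornDepth_eq_top_iff.2
      ⟨hiu, j, hji', univ_subset_iff.1 (hiu ▸ hρ.2 i j hmem)⟩)
  · have := hsub hmem
    rw [hρi, add_natCast_mem_arc_iff hKn', Nat.cast_le] at this
    omega

theorem IsNested.isOrnamentation_arc [NeZero n] (hd : IsNested d) :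
    IsOrnamentation n fun i => arc i (d i) := by
  refine ⟨fun i => ⟨isOrnament_arc _ _, hungAt_arc _ _⟩, fun i j hij => ?_⟩
  obtain ⟨m, -, hmd, rfl⟩ := hij
  by_cases hj : d j = ⊤
  · simp only [hj, arc_top, subset_univ]
  rintro x ⟨m', -, hm'd, rfl⟩
  have hle : ((m + m' : ℕ) : ℕ∞) ≤ d j :=
    calc ((m + m' : ℕ) : ℕ∞) = m' + m := by push_cast; ring
      _ ≤ d (j + m) + m := by gcongr
      _ ≤ d j := hd j m hmd
  exact ⟨m + m', by exact_mod_cast hle.trans_lt (hd.lt_of_ne_top hj), hle, by push_cast; ring⟩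

theorem IsNested.ornDepth_arc [NeZero n] (hd : IsNested d) (hd' : NoLoneTop d) :
    ornDepth (fun i => arc i (d i)) = d := by
  funext i
  by_cases hi : d i = ⊤
  · obtain ⟨j, hji, hj⟩ := hd' i hi
    rw [hi, ornDepth_eq_top_iff]
    exact ⟨by rw [hi, arc_top], j, hji, by rw [hj, arc_top]⟩
  obtain ⟨K, hK⟩ := ENat.ne_top_iff_exists.1 hi
  have hKn : K < n := by exact_mod_cast hK ▸ hd.lt_of_ne_top hi
  have hne : ornDepth (fun i => arc i (d i)) i ≠ ⊤ := by
    rw [ne_eq, ornDepth_eq_top_iff]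
    rintro ⟨hiu, j, hji, hju⟩
    simp only [arc_eq_univ_iff] at hiu hju
    -- two full arcs at `i ≠ j` contradict nestedness at `i`
    obtain ⟨v, hvn, rfl⟩ := exists_lt_eq_add i j
    have hv : 0 < v := Nat.pos_of_ne_zero fun h => hji (by simp [h])
    have hle : ((n - 1 + v : ℕ) : ℕ∞) ≤ K :=
      calc ((n - 1 + v : ℕ) : ℕ∞) = (n - 1 : ℕ) + v := by push_cast; rfl
        _ ≤ d (i + v) + v := by gcongr
        _ ≤ d i := hd i v (le_trans (by norm_cast; omega) hiu)
        _ = K := hK.symm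
    norm_cast at hle
    omega
  rw [ornDepth_of_ne_top hne, ← hK, findGreatest_mem_arc hKn]

end OrnamentDepth

theorem stmt18 (n : ℕ) (hn : 2 ≤ n) :
    ∃ φ : {ρ : ZMod n → Set (ZMod n) // IsOrnamentation n ρ} →
        {t : TITO n // t.Avoids312 ∧ t.IsReal},
      Function.Bijective φ ∧
      ∀ x y : {ρ : ZMod n → Set (ZMod n) // IsOrnamentation n ρ},
        (∀ i : ZMod n, x.val i ⊆ y.val i) ↔
          (φ x).val.Inversions ⊆ (φ y).val.Inversions := by
  have : NeZero n := ⟨by omega⟩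
  let φ (ρ : {ρ : ZMod n → Set (ZMod n) // IsOrnamentation n ρ}) :
      {t : TITO n // t.Avoids312 ∧ t.IsReal} :=
    ⟨ofDepth _ ρ.2.isNested_ornDepth, avoids312_ofDepth _,
      (isReal_ofDepth_iff _).2 (noLoneTop_ornDepth _)⟩
  have hφ : ∀ x y, (∀ i, x.val i ⊆ y.val i) ↔ (φ x).val.Inversions ⊆ (φ y).val.Inversions :=
    fun x y => (x.2.subset_iff_ornDepth_le y.2).trans
      (inversions_ofDepth_subset_iff x.2.isNested_ornDepth y.2.isNested_ornDepth).symm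
  refine ⟨φ, ⟨fun x y h => ?_, fun ⟨t, h312, hreal⟩ => ?_⟩, hφ⟩
  · have h' := congrArg (fun t => t.val.Inversions) h
    exact Subtype.ext <| funext fun i => ((hφ x y).2 h'.le i).antisymm ((hφ y x).2 h'.ge i)
  · have hd := h312.isNested_depth
    have hd' : NoLoneTop t.depth := (isReal_ofDepth_iff hd).1 (h312.eq_ofDepth ▸ hreal)
    refine ⟨⟨_, hd.isOrnamentation_arc⟩, Subtype.ext (TITO.inversions_injective ?_)⟩
    rw [inversions_ofDepth, hd.ornDepth_arc hd', ← inversions_ofDepth hd, ← h312.eq_ofDepth]
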